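/- Let λ > 0 and let b ∈ (0, ∞] (i.e., b is a positive real or infinity). Suppose 𝓗 : (0, b) → ℝ is differentiable and satisfies 𝓗'(u) ≤ λ - 𝓗(u)² for all u ∈ (0, b). Then 𝓗(u) ≤ √λ · cosh(√λ u)/sinh(√λ u) for all u ∈ (0, b). -/

import Mathlib

open Real intervalIntegral


/-- ODE comparison for the Riccati inequality `𝓗' ≤ λ - 𝓗²`: if `λ > 0`, `b ∈ (0, ∞]`
(modeled as an extended real), and `𝓗` is differentiable on `(0, b)` with `𝓗' ≤ λ - 𝓗²`
there, then `𝓗(u) ≤ √λ · cosh(√λ u)/sinh(√λ u)` on `(0, b)`. -/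
theorem riccati_comparison_lambda
    (lam : ℝ) (hlam : 0 < lam) (b : EReal) (hb : 0 < b)
    (H H' : ℝ → ℝ)
    (hderiv : ∀ u : ℝ, 0 < u → (u : EReal) < b → HasDerivAt H (H' u) u)
    (hineq : ∀ u : ℝ, 0 < u → (u : EReal) < b → H' u ≤ lam - (H u) ^ 2) :
    ∀ u : ℝ, 0 < u → (u : EReal) < b →
      H u ≤ Real.sqrt lam * (Real.cosh (Real.sqrt lam * u) / Real.sinh (Real.sqrt lam * u)) := by
  intro u hu hub
  by_contra hcon
  push_neg at hcon
  set s := Real.sqrt lam with hs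
  have hspos : 0 < s := Real.sqrt_pos.mpr hlam
  have hs2 : s ^ 2 = lam := Real.sq_sqrt hlam.le
  -- find a real bound c with u < c and (x < c → x < b)
  obtain ⟨c, huc, hcb⟩ : ∃ c : ℝ, u < c ∧ ∀ x : ℝ, x < c → (x : EReal) < b := by
    induction b with
    | bot => exact absurd hb (by simp)
    | coe r =>
        refine ⟨r, by exact_mod_cast hub, fun x hx => by exact_mod_cast hx⟩
    | top => exact ⟨u + 1, by linarith, fun x _ => EReal.coe_lt_top x⟩
  set D : Set ℝ := Set.Ioo 0 c with hD
  have hopen : IsOpen D := isOpen_Ioo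
  have huD : u ∈ D := ⟨hu, huc⟩
  have hHd : ∀ x ∈ D, HasDerivAt H (H' x) x := fun x hx => hderiv x hx.1 (hcb x hx.2)
  have hHineq : ∀ x ∈ D, H' x ≤ lam - (H x) ^ 2 := fun x hx => hineq x hx.1 (hcb x hx.2)
  have hHcont : ContinuousOn H D := fun x hx => ((hHd x hx).continuousAt).continuousWithinAt
  -- the function g = exp(∫ H)
  set g : ℝ → ℝ := fun x => Real.exp (∫ t in u..x, H t) with hg
  have hgpos : ∀ x, 0 < g x := fun x => Real.exp_pos _
  have hgderiv : ∀ x ∈ D, HasDerivAt g (H x * g x) x := by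
    intro x hx
    have hsub : Set.uIcc u x ⊆ D := (Set.ordConnected_Ioo).uIcc_subset huD hx
    have hint : IntervalIntegrable H MeasureTheory.volume u x :=
      (hHcont.mono hsub).intervalIntegrable
    have hmeas : StronglyMeasurableAtFilter H (nhds x) :=
      hHcont.stronglyMeasurableAtFilter hopen x hx
    have hI : HasDerivAt (fun y => ∫ t in u..y, H t) (H x) x :=
      integral_hasDerivAt_right hint hmeas (hHd x hx).continuousAt
    have := hI.exp
    simpa [hg, mul_comm] using this
  -- the function q
  set q : ℝ → ℝ := fun x => g x * (H x * Real.sinh (s * x) - s * Real.cosh (s * x)) with hq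
  have hsinhD : ∀ y : ℝ, HasDerivAt (fun z => Real.sinh (s * z)) (Real.cosh (s * y) * s) y :=
    fun y => by simpa using ((hasDerivAt_id y).const_mul s).sinh
  have hcoshD : ∀ y : ℝ, HasDerivAt (fun z => Real.cosh (s * z)) (Real.sinh (s * y) * s) y :=
    fun y => by simpa using ((hasDerivAt_id y).const_mul s).cosh
  have hqderiv : ∀ x ∈ D, HasDerivAt q
      (g x * ((H' x + H x ^ 2 - lam) * Real.sinh (s * x))) x := by
    intro x hx
    have hv : HasDerivAt (fun z => H z * Real.sinh (s * z) - s * Real.cosh (s * z))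
        (H' x * Real.sinh (s * x) + H x * (Real.cosh (s * x) * s)
          - s * (Real.sinh (s * x) * s)) x :=
      ((hHd x hx).mul (hsinhD x)).sub ((hcoshD x).const_mul s)
    have := (hgderiv x hx).mul hv
    refine this.congr_deriv ?_
    rw [← hs2]
    ring
  have hqderiv' : ∀ x ∈ D, HasDerivAt q
      (g x * ((H' x + H x ^ 2 - lam) * Real.sinh (s * x))) x := hqderiv
  have hqcont : ContinuousOn q D := fun x hx => ((hqderiv x hx).continuousAt).continuousWithinAt
  -- q is antitone on intervals in (0, u]
  have hqantitone : ∀ t ∈ Set.Ioo (0:ℝ) u, q u ≤ q t := by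
    intro t ht
    have hIcc : Set.Icc t u ⊆ D := fun x hx => ⟨lt_of_lt_of_le ht.1 hx.1, lt_of_le_of_lt hx.2 huc⟩
    have hint : interior (Set.Icc t u) = Set.Ioo t u := interior_Icc
    have := antitoneOn_of_deriv_nonpos (convex_Icc t u) (hqcont.mono hIcc)
      (fun x hx => by
        rw [hint] at hx
        exact ((hqderiv x (hIcc ⟨hx.1.le, hx.2.le⟩)).differentiableAt).differentiableWithinAt)
      (fun x hx => by
        rw [hint] at hx
        have hxD : x ∈ D := hIcc ⟨hx.1.le, hx.2.le⟩
        rw [(hqderiv x hxD).deriv]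
        have h1 : H' x + H x ^ 2 - lam ≤ 0 := by linarith [hHineq x hxD]
        have h2 : 0 < Real.sinh (s * x) := Real.sinh_pos_iff.mpr (mul_pos hspos (ht.1.trans hx.1))
        have h3 : 0 < g x := hgpos x
        exact mul_nonpos_iff.mpr (Or.inl ⟨h3.le, mul_nonpos_iff.mpr (Or.inr ⟨h1, h2.le⟩)⟩))
    exact this (Set.left_mem_Icc.mpr ht.2.le) (Set.right_mem_Icc.mpr ht.2.le) ht.2.le
  -- q u > 0
  have hsinhu : 0 < Real.sinh (s * u) := Real.sinh_pos_iff.mpr (by positivity)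
  have hqu : 0 < q u := by
    have hlt : s * Real.cosh (s * u) < H u * Real.sinh (s * u) := by
      have h := (div_lt_iff₀ hsinhu).mp (by
        calc s * Real.cosh (s * u) / Real.sinh (s * u)
            = s * (Real.cosh (s * u) / Real.sinh (s * u)) := by ring
          _ < H u := hcon)
      linarith
    exact mul_pos (hgpos u) (by linarith)
  set ε : ℝ := q u with hε
  -- m
  set m : ℝ → ℝ := fun x => ε / s * (Real.cosh (s * x) / Real.sinh (s * x))
      + g x / Real.sinh (s * x) with hm
  have hmderiv : ∀ x ∈ Set.Ioo (0:ℝ) u, HasDerivAt m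
      ((q x - ε) / (Real.sinh (s * x)) ^ 2) x := by
    intro x hx
    have hxD : x ∈ D := ⟨hx.1, hx.2.trans huc⟩
    have hsx : Real.sinh (s * x) ≠ 0 := (Real.sinh_pos_iff.mpr (mul_pos hspos hx.1)).ne'
    have h1 : HasDerivAt (fun z => Real.cosh (s * z) / Real.sinh (s * z))
        ((Real.sinh (s * x) * s * Real.sinh (s * x)
          - Real.cosh (s * x) * (Real.cosh (s * x) * s)) / (Real.sinh (s * x)) ^ 2) x :=
      (hcoshD x).div (hsinhD x) hsx
    have h2 : HasDerivAt (fun z => g z / Real.sinh (s * z))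
        ((H x * g x * Real.sinh (s * x) - g x * (Real.cosh (s * x) * s))
          / (Real.sinh (s * x)) ^ 2) x :=
      (hgderiv x hxD).div (hsinhD x) hsx
    have hcs : Real.cosh (s * x) ^ 2 - Real.sinh (s * x) ^ 2 = 1 := Real.cosh_sq_sub_sinh_sq _
    have hnum : Real.sinh (s * x) * s * Real.sinh (s * x)
        - Real.cosh (s * x) * (Real.cosh (s * x) * s) = -s := by
      linear_combination (-s) * hcs
    rw [hnum] at h1
    have := (h1.const_mul (ε / s)).add h2
    refine this.congr_deriv ?_
    simp only [hq]
    field_simp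
    ring
  -- continuity of m on D
  have hmcontD : ∀ x ∈ D, ContinuousAt m x := by
    intro x hx
    have hsx : Real.sinh (s * x) ≠ 0 := (Real.sinh_pos_iff.mpr (mul_pos hspos hx.1)).ne'
    have hc1 : ContinuousAt (fun z => Real.cosh (s * z)) x := (hcoshD x).continuousAt
    have hc2 : ContinuousAt (fun z => Real.sinh (s * z)) x := (hsinhD x).continuousAt
    have hgc : ContinuousAt g x := (hgderiv x hx).continuousAt
    exact (continuousAt_const.mul (hc1.div hc2 hsx)).add (hgc.div hc2 hsx)
  -- m is monotone on [t, u]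
  have hM : ∀ t ∈ Set.Ioo (0:ℝ) u, m t ≤ m u := by
    intro t ht
    have hIcc : Set.Icc t u ⊆ D := fun x hx =>
      ⟨lt_of_lt_of_le ht.1 hx.1, lt_of_le_of_lt hx.2 huc⟩
    have := monotoneOn_of_deriv_nonneg (convex_Icc t u)
      (fun x hx => (hmcontD x (hIcc hx)).continuousWithinAt)
      (fun x hx => by
        rw [interior_Icc] at hx
        have hx' : x ∈ Set.Ioo (0:ℝ) u := ⟨ht.1.trans hx.1, hx.2⟩
        exact ((hmderiv x hx').differentiableAt).differentiableWithinAt)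
      (fun x hx => by
        rw [interior_Icc] at hx
        have hx' : x ∈ Set.Ioo (0:ℝ) u := ⟨ht.1.trans hx.1, hx.2⟩
        rw [(hmderiv x hx').deriv]
        have hqx : ε ≤ q x := hqantitone x hx'
        exact div_nonneg (by linarith) (sq_nonneg _))
    exact this (Set.left_mem_Icc.mpr ht.2.le) (Set.right_mem_Icc.mpr ht.2.le) ht.2.le
  -- choose t small with sinh (s t) < δ
  have hεs : 0 < ε / s := div_pos hqu hspos
  have hMpos : (0:ℝ) < max (m u) 1 := lt_of_lt_of_le one_pos (le_max_right _ _)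
  set δ : ℝ := (ε / s) / max (m u) 1 with hδ
  have hδpos : 0 < δ := div_pos hεs hMpos
  have htend : Filter.Tendsto (fun t : ℝ => Real.sinh (s * t))
      (nhdsWithin 0 (Set.Ioi 0)) (nhds 0) := by
    have hcont : Continuous fun t : ℝ => Real.sinh (s * t) :=
      Real.continuous_sinh.comp (continuous_const.mul continuous_id)
    have := (hcont.tendsto 0).mono_left (nhdsWithin_le_nhds (s := Set.Ioi (0:ℝ)))
    simpa using this
  have hev1 : ∀ᶠ t in nhdsWithin (0:ℝ) (Set.Ioi 0), Real.sinh (s * t) < δ :=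
    htend.eventually (eventually_lt_nhds hδpos)
  have hev2 : ∀ᶠ t in nhdsWithin (0:ℝ) (Set.Ioi 0), t < u :=
    (eventually_lt_nhds hu).filter_mono nhdsWithin_le_nhds
  have hev3 : ∀ᶠ t in nhdsWithin (0:ℝ) (Set.Ioi 0), 0 < t :=
    eventually_mem_nhdsWithin
  obtain ⟨t, htδ, htu, htpos⟩ := (hev1.and (hev2.and hev3)).exists
  obtain ⟨htu, htpos⟩ := And.intro htu htpos
  have ht : t ∈ Set.Ioo (0:ℝ) u := ⟨htpos, htu⟩
  have hsinht : 0 < Real.sinh (s * t) := Real.sinh_pos_iff.mpr (mul_pos hspos htpos)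
  have hcosht : 1 ≤ Real.cosh (s * t) := Real.one_le_cosh _
  have hmt : m t ≤ m u := hM t ht
  have h1 : ε / s / Real.sinh (s * t) ≤ m t := by
    have hgt : 0 < g t / Real.sinh (s * t) := div_pos (hgpos t) hsinht
    have hdd : (1:ℝ) / Real.sinh (s * t) ≤ Real.cosh (s * t) / Real.sinh (s * t) :=
      (div_le_div_iff_of_pos_right hsinht).mpr hcosht
    have h3 := mul_le_mul_of_nonneg_left hdd hεs.le
    rw [mul_one_div] at h3
    simp only [hm]
    linarith
  have h2 : m u < ε / s / Real.sinh (s * t) := by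
    have hp : Real.sinh (s * t) * max (m u) 1 < ε / s := (lt_div_iff₀ hMpos).mp htδ
    have : max (m u) 1 < ε / s / Real.sinh (s * t) := by
      rw [lt_div_iff₀ hsinht]
      nlinarith
    exact lt_of_le_of_lt (le_max_left _ _) this
  exact absurd (h1.trans hmt) (not_le.mpr h2)
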